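/- arXiv:2301.03436 — 2 statements merged into one kernel-verified Lean document; each statement's English description precedes it below -/
import Mathlib

section
/- Let A and E be n×n real symmetric matrices with E positive definite, B an n×m real matrix, and C an m×m real symmetric positive definite matrix, and suppose the Schur complement S = A - B C⁻¹ Bᵀ is positive definite. If the block matrix [[A - E, B], [Bᵀ, C]] is positive semidefinite, then Tr(E⁻¹) ≥ Tr(S⁻¹) = Tr((A - B C⁻¹ Bᵀ)⁻¹). -/
open Matrix

/-- Both Schur complements of the block matrix `[[P, 1], [1, Q⁻¹]]` are positive semidefinite
together: the one of `Q⁻¹` is `P - Q`, the one of `P` is `Q⁻¹ - P⁻¹`. -/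
theorem Matrix.PosDef.posSemidef_inv_sub_inv {K n : Type*} [Field K] [PartialOrder K]
    [StarRing K] [StarOrderedRing K] [Fintype n] [DecidableEq n] {P Q : Matrix n n K}
    (hP : P.PosDef) (hQ : Q.PosDef) (h : (P - Q).PosSemidef) :
    (Q⁻¹ - P⁻¹).PosSemidef := by
  have := hP.isUnit.invertible
  have := hQ.isUnit.invertible
  have := hQ.inv.isUnit.invertible
  have hblock : (fromBlocks P 1 (1 : Matrix n n K)ᴴ Q⁻¹).PosSemidef := by
    rwa [PosDef.fromBlocks₂₂ _ _ hQ.inv, inv_inv_of_invertible, conjTranspose_one, mul_one,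
      one_mul]
  rwa [PosDef.fromBlocks₁₁ _ _ hP, conjTranspose_one, mul_one, one_mul] at hblock

theorem trace_inv_ge_trace_schur_inv_of_LMI_general
    (n m : ℕ) (A E : Matrix (Fin n) (Fin n) ℝ) (B : Matrix (Fin n) (Fin m) ℝ)
    (C : Matrix (Fin m) (Fin m) ℝ)
    (hEpd : E.PosDef) (hCpd : C.PosDef)
    (hS : (A - B * C⁻¹ * Bᵀ).PosDef)
    (hLMI : (Matrix.fromBlocks (A - E) B Bᵀ C).PosSemidef) :
    ((A - B * C⁻¹ * Bᵀ)⁻¹).trace ≤ (E⁻¹).trace := by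
  have := hCpd.isUnit.invertible
  rw [← conjTranspose_eq_transpose_of_trivial] at hS hLMI ⊢
  have hSchur : ((A - B * C⁻¹ * Bᴴ) - E).PosSemidef := by
    rwa [PosDef.fromBlocks₂₂ _ _ hCpd, sub_right_comm] at hLMI
  have htrace := (hS.posSemidef_inv_sub_inv hEpd hSchur).trace_nonneg
  rw [trace_sub] at htrace
  linarith

/-- Combination of the Schur-complement characterization of the LMI (18) with
Lemma 2 of the paper: if `E` is symmetric positive definite, `C` is symmetric
positive definite, the Schur complement `S = A - B C⁻¹ Bᵀ` is positive definite,
and the block matrix `[[A - E, B], [Bᵀ, C]]` is positive semidefinite, then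
`Tr(E⁻¹) ≥ Tr((A - B C⁻¹ Bᵀ)⁻¹)`. -/
theorem trace_inv_ge_trace_schur_inv_of_LMI
    (n m : ℕ) (A E : Matrix (Fin n) (Fin n) ℝ) (B : Matrix (Fin n) (Fin m) ℝ)
    (C : Matrix (Fin m) (Fin m) ℝ)
    (hA : A.IsSymm) (hE : E.IsSymm) (hC : C.IsSymm)
    (hEpd : E.PosDef) (hCpd : C.PosDef)
    (hS : (A - B * C⁻¹ * Bᵀ).PosDef)
    (hLMI : (Matrix.fromBlocks (A - E) B Bᵀ C).PosSemidef) :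
    ((A - B * C⁻¹ * Bᵀ)⁻¹).trace ≤ (E⁻¹).trace :=
  trace_inv_ge_trace_schur_inv_of_LMI_general n m A E B C hEpd hCpd hS hLMI
end

section
/- Let N, M be positive integers and Θ a fixed N×N complex matrix. Let (Ω, μ) be a probability space carrying complex random variables {h̃_n : 1 ≤ n ≤ N} and {g̃_{n,m} : 1 ≤ n ≤ N, 1 ≤ m ≤ M} that together form a mutually independent family, each with zero mean E[·] = 0 and unit second moment E[|·|²] = 1, and each square-integrable. Writing h̃ for the random vector with entries h̃_n and G̃ for the random matrix with entries g̃_{n,m}, we have E[‖h̃ᴴ Θ G̃‖²] = M ‖Θ‖²_F. -/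
/-!
For `a = (i, j)` put `Z a = conj h̃ᵢ * g̃ⱼₘ`, so that the `m`-th entry of `h̃ᴴ Θ G̃` is
`∑ a, Θᵢⱼ * Z a`. Mean zero, unit second moment and independence make the `h̃ᵢ`, and the `g̃ⱼₘ`,
orthonormal in `L²`; independence of the `h̃`-part from the `G̃`-part then factors
`E[conj (Z a) * Z b] = E[conj h̃ₖ * h̃ᵢ] * E[conj g̃ⱼₘ * g̃ₗₘ] = δ_ab`. Hence every entry has second
moment `∑ |Θᵢⱼ|² = ‖Θ‖_F²`, and the `M` columns add up.
-/

open MeasureTheory ProbabilityTheory Matrix ComplexConjugate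

theorem star_vecMul_mul_apply {R n m : Type*} [CommSemiring R] [StarRing R] [Fintype n]
    (h : n → R) (A : Matrix n n R) (B : Matrix n m R) (j : m) :
    (star h ᵥ* (A * B)) j = ∑ a : n × n, A a.1 a.2 * (star (h a.1) * B a.2 j) := by
  simp only [vecMul, dotProduct, mul_apply, Pi.star_apply, Finset.mul_sum,
    Fintype.sum_prod_type]
  refine Finset.sum_congr rfl fun a _ => Finset.sum_congr rfl fun b _ => ?_
  ring

theorem norm_sq_sum_mul_eq {ι : Type*} [Fintype ι] (c z : ι → ℂ) :
    ((‖∑ a, c a * z a‖ ^ 2 : ℝ) : ℂ) = ∑ a, ∑ b, conj (c a) * c b * (conj (z a) * z b) := by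
  rw [Complex.ofReal_pow, ← Complex.conj_mul', map_sum, Finset.sum_mul_sum]
  simp only [map_mul]
  refine Finset.sum_congr rfl fun a _ => Finset.sum_congr rfl fun b _ => ?_
  ring

section

variable {Ω : Type*} {mΩ : MeasurableSpace Ω} {μ : Measure Ω}

section Orthonormal

variable {ι : Type*} [Fintype ι] {Z : ι → Ω → ℂ}

theorem integrable_norm_sq_sum_mul
    (hint : ∀ a b, Integrable (fun ω => conj (Z a ω) * Z b ω) μ) (c : ι → ℂ) :
    Integrable (fun ω => ‖∑ a, c a * Z a ω‖ ^ 2) μ := by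
  have hsum : Integrable (fun ω => ∑ a, ∑ b, conj (c a) * c b * (conj (Z a ω) * Z b ω)) μ :=
    integrable_finsetSum _ fun a _ => integrable_finsetSum _ fun b _ => (hint a b).const_mul _
  refine hsum.re.congr (ae_of_all _ fun ω => ?_)
  simp only [RCLike.re_to_complex, ← norm_sq_sum_mul_eq, Complex.ofReal_re]

theorem integral_norm_sq_sum_mul_of_orthonormal [DecidableEq ι]
    (hint : ∀ a b, Integrable (fun ω => conj (Z a ω) * Z b ω) μ)
    (horth : ∀ a b, ∫ ω, conj (Z a ω) * Z b ω ∂μ = if a = b then 1 else 0) (c : ι → ℂ) :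
    ∫ ω, ‖∑ a, c a * Z a ω‖ ^ 2 ∂μ = ∑ a, ‖c a‖ ^ 2 := by
  apply Complex.ofReal_injective
  rw [← integral_complex_ofReal]
  simp_rw [norm_sq_sum_mul_eq]
  rw [integral_finsetSum _ fun a _ => integrable_finsetSum _ fun b _ => (hint a b).const_mul _]
  simp_rw [integral_finsetSum _ fun b _ => (hint _ b).const_mul _, integral_const_mul, horth,
    mul_ite, mul_one, mul_zero, Finset.sum_ite_eq, Finset.mem_univ, if_true, Complex.conj_mul']
  push_cast
  rfl

end Orthonormal

theorem integral_conj_mul_eq_ite_of_iIndepFun {ι : Type*} [DecidableEq ι] {X : ι → Ω → ℂ}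
    (hindep : iIndepFun X μ) (hL2 : ∀ i, MemLp (X i) 2 μ)
    (hmean : ∀ i, ∫ ω, X i ω ∂μ = 0) (hvar : ∀ i, ∫ ω, ‖X i ω‖ ^ 2 ∂μ = 1) (i j : ι) :
    ∫ ω, conj (X i ω) * X j ω ∂μ = if i = j then 1 else 0 := by
  split_ifs with hij
  · subst hij
    simp_rw [Complex.conj_mul']
    exact_mod_cast (integral_complex_ofReal.trans (congrArg _ (hvar i)))
  · have hconj : IndepFun (fun ω => conj (X i ω)) (X j) μ :=
      (hindep.indepFun hij).comp continuous_star.measurable measurable_id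
    rw [hconj.integral_fun_mul_eq_mul_integral (hL2 i).star.1 (hL2 j).1]
    simp [hmean j]

section Product

variable {ι κ : Type*} {X : ι ⊕ κ → Ω → ℂ}

theorem indepFun_conj_mul_conj_mul_of_iIndepFun
    (hindep : iIndepFun X μ) (hmeas : ∀ i, AEMeasurable (X i) μ) (i k : ι) (p q : κ) :
    IndepFun (fun ω => conj (X (.inl i) ω) * X (.inl k) ω)
      (fun ω => conj (X (.inr p) ω) * X (.inr q) ω) μ :=
  (hindep.indepFun_prodMk_prodMk₀ hmeas (.inl i) (.inl k) (.inr p) (.inr q)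
    (by simp) (by simp) (by simp) (by simp)).comp
    (φ := fun z : ℂ × ℂ => conj z.1 * z.2) (ψ := fun z : ℂ × ℂ => conj z.1 * z.2)
    (by fun_prop) (by fun_prop)

theorem integrable_conj_mul_conj_mul_of_iIndepFun
    (hindep : iIndepFun X μ) (hL2 : ∀ i, MemLp (X i) 2 μ) (a b : ι × κ) :
    Integrable (fun ω => conj (conj (X (.inl a.1) ω) * X (.inr a.2) ω) *
      (conj (X (.inl b.1) ω) * X (.inr b.2) ω)) μ := by
  have hprod : ∀ i j, Integrable (fun ω => conj (X i ω) * X j ω) μ :=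
    fun i j => (hL2 i).star.integrable_mul (hL2 j)
  refine ((indepFun_conj_mul_conj_mul_of_iIndepFun hindep (fun i => (hL2 i).aemeasurable)
    b.1 a.1 a.2 b.2).integrable_mul (hprod _ _) (hprod _ _)).congr (ae_of_all _ fun ω => ?_)
  simp only [Pi.mul_apply, map_mul, Complex.conj_conj]
  ring

theorem integral_conj_mul_conj_mul_eq_ite_of_iIndepFun [DecidableEq ι] [DecidableEq κ]
    (hindep : iIndepFun X μ) (hL2 : ∀ i, MemLp (X i) 2 μ)
    (horth : ∀ i j, ∫ ω, conj (X i ω) * X j ω ∂μ = if i = j then 1 else 0) (a b : ι × κ) :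
    ∫ ω, conj (conj (X (.inl a.1) ω) * X (.inr a.2) ω) *
      (conj (X (.inl b.1) ω) * X (.inr b.2) ω) ∂μ = if a = b then 1 else 0 := by
  have hmeas : ∀ i j, AEStronglyMeasurable (fun ω => conj (X i ω) * X j ω) μ :=
    fun i j => ((hL2 i).star.integrable_mul (hL2 j)).1
  calc _ = ∫ ω, conj (X (.inl b.1) ω) * X (.inl a.1) ω *
        (conj (X (.inr a.2) ω) * X (.inr b.2) ω) ∂μ := by
        refine integral_congr_ae (ae_of_all _ fun ω => ?_)
        simp only [map_mul, Complex.conj_conj]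
        ring
    _ = if a = b then 1 else 0 := by
        rw [(indepFun_conj_mul_conj_mul_of_iIndepFun hindep (fun i => (hL2 i).aemeasurable)
          b.1 a.1 a.2 b.2).integral_fun_mul_eq_mul_integral (hmeas _ _) (hmeas _ _),
          horth, horth]
        simp [Prod.ext_iff, eq_comm, ← ite_and, and_comm]

end Product

end

theorem expectation_norm_sq_vecMul_nlos_general
    (N M : ℕ)
    (Θ : Matrix (Fin N) (Fin N) ℂ)
    (Ω : Type*) [MeasureSpace Ω]
    (htil : Fin N → Ω → ℂ) (gtil : Fin N → Fin M → Ω → ℂ)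
    (hindep : iIndepFun
      (Sum.elim htil (fun p : Fin N × Fin M => gtil p.1 p.2)) volume)
    (hL2h : ∀ n, MemLp (htil n) 2 volume)
    (hL2g : ∀ n m, MemLp (gtil n m) 2 volume)
    (hmeanh : ∀ n, (∫ ω, htil n ω) = 0)
    (hmeang : ∀ n m, (∫ ω, gtil n m ω) = 0)
    (hvarh : ∀ n, (∫ ω, ‖htil n ω‖ ^ 2) = 1)
    (hvarg : ∀ n m, (∫ ω, ‖gtil n m ω‖ ^ 2) = 1) :
    (∫ ω, ∑ m : Fin M,
        ‖(star (fun n => htil n ω) ᵥ* (Θ * Matrix.of fun n m' => gtil n m' ω)) m‖ ^ 2)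
      = M * ∑ i : Fin N, ∑ j : Fin N, ‖Θ i j‖ ^ 2 := by
  set X := Sum.elim htil (fun p : Fin N × Fin M => gtil p.1 p.2)
  have hL2 : ∀ i, MemLp (X i) 2 volume := by rintro (n | ⟨n, m⟩) <;> simp [X, hL2h, hL2g]
  have horthX := integral_conj_mul_eq_ite_of_iIndepFun hindep hL2
    (by rintro (n | ⟨n, m⟩) <;> simp [X, hmeanh, hmeang])
    (by rintro (n | ⟨n, m⟩) <;> simp [X, hvarh, hvarg])
  have hintZ : ∀ m, ∀ a b : Fin N × Fin N, Integrable (fun ω =>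
      conj (conj (htil a.1 ω) * gtil a.2 m ω) * (conj (htil b.1 ω) * gtil b.2 m ω)) :=
    fun m a b =>
      integrable_conj_mul_conj_mul_of_iIndepFun hindep hL2 (a.1, (a.2, m)) (b.1, (b.2, m))
  have horthZ : ∀ m, ∀ a b : Fin N × Fin N, ∫ ω,
      conj (conj (htil a.1 ω) * gtil a.2 m ω) * (conj (htil b.1 ω) * gtil b.2 m ω) =
        if a = b then 1 else 0 := fun m a b => by
    simpa [X, Prod.ext_iff] using integral_conj_mul_conj_mul_eq_ite_of_iIndepFun
      hindep hL2 horthX (a.1, (a.2, m)) (b.1, (b.2, m))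
  simp_rw [star_vecMul_mul_apply, of_apply, Complex.star_def]
  rw [integral_finsetSum _ fun m _ => integrable_norm_sq_sum_mul (hintZ m) _]
  simp_rw [integral_norm_sq_sum_mul_of_orthonormal (hintZ _) (horthZ _), Fintype.sum_prod_type]
  simp

/-- Non-LoS term of the ergodic rate decomposition (B-2): for jointly independent,
zero-mean, unit-second-moment, square-integrable complex random variables forming
the random vector `h̃` and random matrix `G̃`, one has `E[‖h̃ᴴ Θ G̃‖²] = M ‖Θ‖²_F`. -/
theorem expectation_norm_sq_vecMul_nlos
    (N M : ℕ) (hN : 0 < N) (hM : 0 < M)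
    (Θ : Matrix (Fin N) (Fin N) ℂ)
    (Ω : Type*) [MeasureSpace Ω] [IsProbabilityMeasure (volume : Measure Ω)]
    (htil : Fin N → Ω → ℂ) (gtil : Fin N → Fin M → Ω → ℂ)
    (hindep : iIndepFun
      (Sum.elim htil (fun p : Fin N × Fin M => gtil p.1 p.2)) volume)
    (hL2h : ∀ n, MemLp (htil n) 2 volume)
    (hL2g : ∀ n m, MemLp (gtil n m) 2 volume)
    (hmeanh : ∀ n, (∫ ω, htil n ω) = 0)
    (hmeang : ∀ n m, (∫ ω, gtil n m ω) = 0)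
    (hvarh : ∀ n, (∫ ω, ‖htil n ω‖ ^ 2) = 1)
    (hvarg : ∀ n m, (∫ ω, ‖gtil n m ω‖ ^ 2) = 1) :
    (∫ ω, ∑ m : Fin M,
        ‖(star (fun n => htil n ω) ᵥ* (Θ * Matrix.of fun n m' => gtil n m' ω)) m‖ ^ 2)
      = M * ∑ i : Fin N, ∑ j : Fin N, ‖Θ i j‖ ^ 2 :=
  expectation_norm_sq_vecMul_nlos_general N M Θ Ω htil gtil hindep hL2h hL2g hmeanh hmeang hvarh
    hvarg
end
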